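/- Let f(z) = ∑ᵢ₌₀ⁿ aᵢ z^{n-i} with a₀, aₙ ≠ 0 have the form f(z) = a₀(z-w)²(z-z₃)⋯(z-zₙ) with w, z₃,…,zₙ pairwise distinct. Then for R = R(f, f') (as a function of the coefficients bⱼ of f'), for all j₁, j₂, k₁, k₂ ∈ {0,…,n-1}: (∂²R/∂b_{j₂}∂b_{j₁}) / (∂²R/∂b_{k₂}∂b_{k₁}) = w^{(k₂+k₁)-(j₂+j₁)}, the denominators being nonzero. -/

import Mathlib

open Polynomial

/-- Partial derivative of `F` with respect to the `j`-th coordinate. -/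
noncomputable def pd {ι : Type*} [DecidableEq ι] (j : ι) (F : (ι → ℂ) → ℂ) :
    (ι → ℂ) → ℂ :=
  fun b => deriv (fun t => F (Function.update b j t)) (b j)

lemma hasDerivAt_eval_update {σ : Type*} [DecidableEq σ] (P : MvPolynomial σ ℂ)
    (b : σ → ℂ) (j : σ) (t : ℂ) :
    HasDerivAt (fun s => MvPolynomial.eval (Function.update b j s) P)
      (MvPolynomial.eval (Function.update b j t) (MvPolynomial.pderiv j P)) t := by
  induction P using MvPolynomial.induction_on with
  | C a => simpa using hasDerivAt_const t _
  | add p q hp hq => simpa [Pi.add_def] using hp.add hq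
  | mul_X p i hp =>
      have hX : HasDerivAt (fun s => Function.update b j s i)
          (if j = i then 1 else 0) t := by
        rcases eq_or_ne j i with h | h
        · subst h; simpa using hasDerivAt_id' t
        · simpa [Function.update_of_ne (Ne.symm h), h] using hasDerivAt_const t (b i)
      have := hp.mul hX
      rcases eq_or_ne j i with h | h
      · subst h
        simpa [Pi.mul_def, MvPolynomial.pderiv_mul, mul_comm, mul_assoc, mul_left_comm, add_comm] using this
      · simpa [Pi.mul_def, MvPolynomial.pderiv_mul, MvPolynomial.pderiv_X_of_ne (Ne.symm h), h,
          Function.update_of_ne (Ne.symm h), mul_comm, mul_assoc, mul_left_comm] using this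

lemma pd_eval {σ : Type*} [DecidableEq σ] (P : MvPolynomial σ ℂ) (j : σ) :
    pd j (fun b => MvPolynomial.eval b P)
      = fun b => MvPolynomial.eval b (MvPolynomial.pderiv j P) := by
  funext b
  have h := (hasDerivAt_eval_update P b j (b j)).deriv
  simpa [pd, Function.update_eq_self] using h

open MvPolynomial in
lemma key_eval {n : ℕ} (b : Fin n → ℂ) (a : ℂ) (g q : MvPolynomial (Fin n) ℂ) (c : Fin n → ℂ)
    (hg : ∀ j, pderiv j g = MvPolynomial.C (c j)) (h0 : MvPolynomial.eval b g = 0)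
    (j₁ j₂ : Fin n) :
    MvPolynomial.eval b (pderiv j₁ (pderiv j₂ (MvPolynomial.C a * (g * g * q))))
      = a * (2 * c j₁ * c j₂ * MvPolynomial.eval b q) := by
  simp [pderiv_C_mul, pderiv_mul, hg, h0, pderiv_C]
  exact Or.inl (by ring)

/-- Relations (61): if `f = a₀(z-w)²(z-z₃)⋯(z-zₙ)` with pairwise distinct roots and nonzero
constant term, then the ratios of second partial derivatives of `R(f,f')` in the
coefficients of `f'` recover powers of `w`. -/
theorem stmt12 (n : ℕ) (hn : 2 ≤ n) (a₀ w : ℂ) (ha₀ : a₀ ≠ 0)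
    (r : Fin (n - 2) → ℂ) (hr : Function.Injective r) (hrw : ∀ i, r i ≠ w)
    (f : Polynomial ℂ)
    (hf : f = C a₀ * (X - C w) ^ 2 * ∏ i, (X - C (r i)))
    (hc : f.coeff 0 ≠ 0)
    (Rb : (Fin n → ℂ) → ℂ)
    (hRb : Rb = fun b' => a₀ ^ (n - 1) *
        (f.roots.map (fun zz => ∑ j : Fin n, b' j * zz ^ ((n - 1) - (j : ℕ)))).prod)
    (b : Fin n → ℂ)
    (hbdef : ∀ j : Fin n, b j = (derivative f).coeff ((n - 1) - (j : ℕ))) :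
    ∀ l k : List (Fin n), l.length = 2 → k.length = 2 →
      (k.foldr pd Rb) b ≠ 0 ∧
      (l.foldr pd Rb) b =
        w ^ ((k.map (fun j => ((j : ℕ) : ℤ))).sum - (l.map (fun j => ((j : ℕ) : ℤ))).sum) *
          (k.foldr pd Rb) b := by
  classical
  -- basic nonvanishing
  have hw0 : w ≠ 0 := by
    intro h
    apply hc
    rw [Polynomial.coeff_zero_eq_eval_zero, hf]
    simp [h]
  -- roots of f
  have hprodne : (∏ i, ((X : ℂ[X]) - C (r i))) ≠ 0 :=
    (monic_prod_of_monic _ _ fun i _ => monic_X_sub_C (r i)).ne_zero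
  have hroots : f.roots = 2 • {w} + Multiset.map r Finset.univ.val := by
    rw [hf, mul_assoc, Polynomial.roots_C_mul _ ha₀,
      Polynomial.roots_mul (mul_ne_zero (pow_ne_zero 2 (X_sub_C_ne_zero w)) hprodne),
      Polynomial.roots_pow, Polynomial.roots_X_sub_C]
    congr 1
    have : (∏ i, ((X : ℂ[X]) - C (r i)))
        = ((Finset.univ.val.map r).map fun a => X - C a).prod := by
      rw [Multiset.map_map]; rfl
    rw [this, Polynomial.roots_multiset_prod_X_sub_C]
  -- the multivariate polynomial model
  set e : Fin n → ℕ := fun j => (n - 1) - (j : ℕ) with he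
  set L : ℂ → MvPolynomial (Fin n) ℂ :=
    fun z => ∑ j, MvPolynomial.C (z ^ e j) * MvPolynomial.X j with hL
  set Q : MvPolynomial (Fin n) ℂ := ∏ i, L (r i) with hQ
  set P : MvPolynomial (Fin n) ℂ :=
    MvPolynomial.C (a₀ ^ (n - 1)) * (L w * L w * Q) with hP
  have hevalL : ∀ (b' : Fin n → ℂ) (z : ℂ),
      MvPolynomial.eval b' (L z) = ∑ j : Fin n, b' j * z ^ e j := by
    intro b' z
    simp [hL, MvPolynomial.eval_sum, mul_comm]
  have hRbP : Rb = fun b' => MvPolynomial.eval b' P := by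
    funext b'
    rw [hRb, hroots]
    simp only [Multiset.map_add, Multiset.prod_add, two_smul, Multiset.map_singleton,
      Multiset.prod_singleton, Multiset.map_map, hP, MvPolynomial.eval_mul,
      MvPolynomial.eval_C, hQ, MvPolynomial.eval_prod, hevalL]
    rw [Finset.prod_eq_multiset_prod]
    simp only [Multiset.map_map, Function.comp]
    rfl
  -- pderiv of L
  have hLwj : ∀ j, MvPolynomial.pderiv j (L w) = MvPolynomial.C (w ^ e j) := by
    intro j
    simp [hL, MvPolynomial.pderiv_C_mul, Pi.single_apply, mul_ite, mul_one, mul_zero,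
      Finset.sum_ite_eq]
  -- degree facts
  have hnatdeg : f.natDegree = n := by
    rw [hf, natDegree_mul (mul_ne_zero (C_ne_zero.mpr ha₀)
        (pow_ne_zero 2 (X_sub_C_ne_zero w))) hprodne,
      natDegree_mul (C_ne_zero.mpr ha₀) (pow_ne_zero 2 (X_sub_C_ne_zero w)),
      natDegree_C, natDegree_pow, natDegree_X_sub_C,
      Polynomial.natDegree_prod _ _ (fun i _ => X_sub_C_ne_zero (r i))]
    simp
    omega
  have hd : (derivative f).natDegree < n := by
    have h := Polynomial.natDegree_derivative_lt (p := f) (by rw [hnatdeg]; omega)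
    rwa [hnatdeg] at h
  -- evaluation of f' via the coefficients b
  have hevalz : ∀ x : ℂ, eval x (derivative f) = ∑ j : Fin n, b j * x ^ e j := by
    intro x
    rw [Polynomial.eval_eq_sum_range' hd, ← Finset.sum_range_reflect,
      ← Fin.sum_univ_eq_sum_range]
    refine Finset.sum_congr rfl fun j _ => ?_
    rw [hbdef j]
  have hevalLb : ∀ z : ℂ, MvPolynomial.eval b (L z) = eval z (derivative f) := by
    intro z
    rw [hevalL, hevalz]
  -- f'(w) = 0
  have hLw0 : MvPolynomial.eval b (L w) = 0 := by
    rw [hevalLb, hf]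
    simp [derivative_mul, derivative_pow]
  -- f'(r i) ≠ 0
  have hfr : ∀ i, eval (r i) (derivative f) ≠ 0 := by
    intro i
    have hsplit : f = (X - C (r i)) *
        (C a₀ * (X - C w) ^ 2 * ∏ i' ∈ Finset.univ.erase i, (X - C (r i'))) := by
      rw [hf, ← Finset.mul_prod_erase _ _ (Finset.mem_univ i)]
      ring
    rw [hsplit, derivative_mul]
    simp only [derivative_sub, derivative_X, derivative_C, sub_zero, one_mul, eval_add,
      eval_mul, eval_sub, eval_X, eval_C, sub_self, zero_mul, add_zero, eval_pow, eval_prod]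
    refine mul_ne_zero (mul_ne_zero ha₀ (pow_ne_zero 2 (sub_ne_zero.mpr (hrw i)))) ?_
    rw [Finset.prod_ne_zero_iff]
    intro i' hi'
    refine sub_ne_zero.mpr fun h => ?_
    exact (Finset.mem_erase.mp hi').1 (hr h).symm
  -- eval of Q
  have hQne : MvPolynomial.eval b Q ≠ 0 := by
    rw [hQ, MvPolynomial.eval_prod, Finset.prod_ne_zero_iff]
    intro i _
    rw [hevalLb]
    exact hfr i
  -- closed form for the second partials
  have hfold : ∀ m₁ m₂ : Fin n, ([m₁, m₂].foldr pd Rb) b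
      = a₀ ^ (n - 1) * (2 * w ^ e m₁ * w ^ e m₂ * MvPolynomial.eval b Q) := by
    intro m₁ m₂
    show pd m₁ (pd m₂ Rb) b = _
    rw [hRbP, pd_eval, pd_eval]
    exact key_eval b _ (L w) Q (fun j => w ^ e j) hLwj hLw0 m₁ m₂
  have hne : ∀ m₁ m₂ : Fin n,
      a₀ ^ (n - 1) * (2 * w ^ e m₁ * w ^ e m₂ * MvPolynomial.eval b Q) ≠ 0 := by
    intro m₁ m₂
    exact mul_ne_zero (pow_ne_zero _ ha₀) (mul_ne_zero (mul_ne_zero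
      (mul_ne_zero two_ne_zero (pow_ne_zero _ hw0)) (pow_ne_zero _ hw0)) hQne)
  have hcast : ∀ m : Fin n, ((e m : ℕ) : ℤ) = (n : ℤ) - 1 - (m : ℕ) := by
    intro m
    have := m.2
    simp only [he]
    omega
  intro l k hl hk
  obtain ⟨j₁, j₂, rfl⟩ := List.length_eq_two.mp hl
  obtain ⟨k₁, k₂, rfl⟩ := List.length_eq_two.mp hk
  rw [hfold, hfold]
  refine ⟨hne k₁ k₂, ?_⟩
  have hexp : (w : ℂ) ^ e j₁ * w ^ e j₂
      = w ^ ((((k₁ : ℕ) : ℤ) + ((k₂ : ℕ) : ℤ) + 0) - ((((j₁ : ℕ) : ℤ)) + ((j₂ : ℕ) : ℤ) + 0))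
        * (w ^ e k₁ * w ^ e k₂) := by
    rw [← zpow_natCast w (e j₁), ← zpow_natCast w (e j₂), ← zpow_natCast w (e k₁),
      ← zpow_natCast w (e k₂), ← zpow_add₀ hw0, ← zpow_add₀ hw0, ← zpow_add₀ hw0]
    congr 1
    rw [hcast, hcast, hcast, hcast]
    have := j₁.2; have := j₂.2; have := k₁.2; have := k₂.2
    omega
  have hs1 : (([j₁, j₂] : List (Fin n)).map (fun j => ((j : ℕ) : ℤ))).sum
      = (((j₁ : ℕ) : ℤ)) + ((j₂ : ℕ) : ℤ) + 0 := by
    simp [List.sum_cons]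
  have hs2 : (([k₁, k₂] : List (Fin n)).map (fun j => ((j : ℕ) : ℤ))).sum
      = (((k₁ : ℕ) : ℤ)) + ((k₂ : ℕ) : ℤ) + 0 := by
    simp [List.sum_cons]
  rw [hs1, hs2]
  calc a₀ ^ (n - 1) * (2 * w ^ e j₁ * w ^ e j₂ * MvPolynomial.eval b Q)
      = (w ^ e j₁ * w ^ e j₂) * (a₀ ^ (n - 1) * (2 * MvPolynomial.eval b Q)) := by ring
    _ = _ := by rw [hexp]; ring
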